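/- arXiv:2203.03052 — 3 statements merged into one kernel-verified Lean document; each statement's English description precedes it below -/
import Mathlib

section
/- Let A be a symmetric 2×2 matrix with integer entries and let N be a positive integer. Suppose c₁, c₂ ∈ ℝ² are such that there exist nonzero real numbers k, k' with sgn(k) = sgn(k'), c₁ᵀA = k·(1,0) and c₂ᵀA = k'·(0,−1). Let a = (a₁,a₂) ∈ ℚ² with 0 < a₁ < 1 and 0 < a₂ < 1, let b ∈ ℝ², and let τ ∈ ℍ. Assume that Σ_{n∈ℤ², n₁≥0, n₂≥0} |q|^{N·Q(n+a)} and Σ_{n∈ℤ², n₁<0, n₂<0} |q|^{N·Q(n+a)} are finite. Then Σ_{n∈ℤ², n₁≥0, n₂≥0} e^{2πi B(n,b)} q^{N·Q(n+a)} − Σ_{n∈ℤ², n₁<0, n₂<0} e^{2πi B(n,b)} q^{N·Q(n+a)} = (sgn(k)/2)·Σ_{n∈ℤ²} ( sgn(B(c₁, n+a)) − sgn(B(c₂, n+a)) ) e^{2πi B(n,b)} q^{N·Q(n+a)}. (This is the paper's Lemma expressing the graded trace T^{(N)}_{a,b}(τ) of the cone vertex algebra module as sgn(k)·e^{−2πiB(a,b)}/(2η(τ)²)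 times the indefinite theta function Θ_{a,b}(Nτ), with the eta factors cancelled.) -/
open Complex Real

/-- `qp τ c` is `q^c = e^{2πicτ}`. -/
noncomputable def qp (τ : ℂ) (c : ℝ) : ℂ := Complex.exp (2 * Real.pi * Complex.I * c * τ)

/-- `ph x = e^{2πix}` for real `x`. -/
noncomputable def ph (x : ℝ) : ℂ := Complex.exp (2 * Real.pi * Complex.I * x)

/-- The bilinear form `B(v,w) = vᵀ A w`. -/
noncomputable def Bf (A : Matrix (Fin 2) (Fin 2) ℝ) (v w : Fin 2 → ℝ) : ℝ :=
  dotProduct v (A.mulVec w)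

/-- The quadratic form `Q(v) = B(v,v)/2`. -/
noncomputable def Qf (A : Matrix (Fin 2) (Fin 2) ℝ) (v : Fin 2 → ℝ) : ℝ := Bf A v v / 2

/-- The point of `ℝ²` attached to `n ∈ ℤ²`. -/
noncomputable def vec (n : ℤ × ℤ) : Fin 2 → ℝ := ![(n.1 : ℝ), (n.2 : ℝ)]

/-!
Write `B(c₁, w) = k w₁` and `B(c₂, w) = -k' w₂`. Since `0 < aᵢ < 1`, the sign of `nᵢ + aᵢ` is `1`
for `nᵢ ≥ 0` and `-1` for `nᵢ < 0`, so `(sgn k / 2) (sgn B(c₁, n + a) - sgn B(c₂, n + a))` is `1`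
on the cone `n ≥ 0`, `-1` on the cone `n < 0` and `0` on the two mixed quadrants. The theta series
is therefore termwise the difference of the two cone sums, and absolute convergence on the cones
lets the difference be taken inside the sum.
-/

namespace Real

lemma sign_mul (x y : ℝ) : sign (x * y) = sign x * sign y := by
  rcases lt_trichotomy x 0 with hx | rfl | hx <;> rcases lt_trichotomy y 0 with hy | rfl | hy <;>
    simp [sign_of_neg, sign_of_pos, mul_pos_of_neg_of_neg, mul_neg_of_pos_of_neg,
      mul_neg_of_neg_of_pos, *]

lemma sign_mul_self_of_ne_zero {x : ℝ} (hx : x ≠ 0) : sign x * sign x = 1 := by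
  rcases sign_apply_eq_of_ne_zero x hx with h | h <;> simp [h]

lemma sign_intCast_add_of_pos_of_lt_one (m : ℤ) {α : ℝ} (h0 : 0 < α) (h1 : α < 1) :
    sign (m + α) = if 0 ≤ m then 1 else -1 := by
  split_ifs with hm
  · have : (0 : ℝ) ≤ m := by exact_mod_cast hm
    exact sign_of_pos (by linarith)
  · have : (m : ℝ) ≤ -1 := by exact_mod_cast (by omega : m ≤ -1)
    exact sign_of_neg (by linarith)

end Real

lemma ite_nonneg_and_sub_ite_neg_and (m₁ m₂ : ℤ) :
    ((if 0 ≤ m₁ ∧ 0 ≤ m₂ then 1 else 0) - (if m₁ < 0 ∧ m₂ < 0 then 1 else 0) : ℝ) =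
      ((if 0 ≤ m₁ then 1 else -1) + (if 0 ≤ m₂ then 1 else -1)) / 2 := by
  split_ifs <;> first | omega | norm_num

lemma summable_ite_of_norm_le {ι E : Type*} [SeminormedAddCommGroup E] [CompleteSpace E]
    {p : ι → Prop} [DecidablePred p] {f g : ι → E} (hfg : ∀ i, ‖f i‖ ≤ ‖g i‖)
    (h : Summable fun i => if p i then ‖g i‖ else 0) :
    Summable fun i => if p i then f i else 0 :=
  h.of_norm_bounded fun i => by split_ifs <;> simp [hfg]

lemma norm_ph (x : ℝ) : ‖ph x‖ = 1 := by
  simp [ph, Complex.norm_exp]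

lemma Bf_eq_vecMul_dotProduct (A : Matrix (Fin 2) (Fin 2) ℝ) (v w : Fin 2 → ℝ) :
    Bf A v w = Matrix.vecMul v A ⬝ᵥ w :=
  Matrix.dotProduct_mulVec v A w

lemma sign_half_mul_sign_Bf_sub_sign_Bf (A : Matrix (Fin 2) (Fin 2) ℝ) {c₁ c₂ : Fin 2 → ℝ}
    {k k' : ℝ} (hk : k ≠ 0) (hkk' : sign k = sign k')
    (hc₁ : Matrix.vecMul c₁ A = k • ![1, 0]) (hc₂ : Matrix.vecMul c₂ A = k' • ![0, -1])
    {a : Fin 2 → ℝ} (ha0 : 0 < a 0) (ha0' : a 0 < 1) (ha1 : 0 < a 1) (ha1' : a 1 < 1)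
    (n : ℤ × ℤ) :
    sign k / 2 * (sign (Bf A c₁ (vec n + a)) - sign (Bf A c₂ (vec n + a))) =
      (if 0 ≤ n.1 ∧ 0 ≤ n.2 then 1 else 0) - (if n.1 < 0 ∧ n.2 < 0 then 1 else 0) := by
  have hB₁ : Bf A c₁ (vec n + a) = k * (n.1 + a 0) := by
    simp [Bf_eq_vecMul_dotProduct, hc₁, vec, dotProduct, Fin.sum_univ_two, Matrix.vecHead,
      Matrix.vecTail]
  have hB₂ : Bf A c₂ (vec n + a) = -k' * (n.2 + a 1) := by
    simp [Bf_eq_vecMul_dotProduct, hc₂, vec, dotProduct, Fin.sum_univ_two, Matrix.vecHead,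
      Matrix.vecTail]
  rw [hB₁, hB₂, Real.sign_mul, Real.sign_mul, Real.sign_neg, ← hkk',
    sign_intCast_add_of_pos_of_lt_one _ ha0 ha0', sign_intCast_add_of_pos_of_lt_one _ ha1 ha1',
    ite_nonneg_and_sub_ite_neg_and]
  linear_combination
    ((if 0 ≤ n.1 then (1 : ℝ) else -1) + (if 0 ≤ n.2 then 1 else -1)) / 2 *
      sign_mul_self_of_ne_zero hk

theorem cone_trace_eq_indefinite_theta_interior_general
    (A : Matrix (Fin 2) (Fin 2) ℝ)
    (N : ℕ)
    (c₁ c₂ : Fin 2 → ℝ) (k k' : ℝ) (hk : k ≠ 0)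
    (hkk' : Real.sign k = Real.sign k')
    (hc₁ : Matrix.vecMul c₁ A = k • ![1, 0])
    (hc₂ : Matrix.vecMul c₂ A = k' • ![0, -1])
    (a : Fin 2 → ℝ)
    (ha0 : 0 < a 0) (ha0' : a 0 < 1) (ha1 : 0 < a 1) (ha1' : a 1 < 1)
    (b : Fin 2 → ℝ) (τ : ℂ)
    (hsum1 : Summable fun n : ℤ × ℤ =>
      if 0 ≤ n.1 ∧ 0 ≤ n.2 then ‖qp τ ((N : ℝ) * Qf A (vec n + a))‖ else 0)
    (hsum2 : Summable fun n : ℤ × ℤ =>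
      if n.1 < 0 ∧ n.2 < 0 then ‖qp τ ((N : ℝ) * Qf A (vec n + a))‖ else 0) :
    (∑' n : ℤ × ℤ, if 0 ≤ n.1 ∧ 0 ≤ n.2 then
        ph (Bf A (vec n) b) * qp τ ((N : ℝ) * Qf A (vec n + a)) else 0) -
      (∑' n : ℤ × ℤ, if n.1 < 0 ∧ n.2 < 0 then
        ph (Bf A (vec n) b) * qp τ ((N : ℝ) * Qf A (vec n + a)) else 0) =
    ((Real.sign k / 2 : ℝ) : ℂ) *
      ∑' n : ℤ × ℤ,
        ((Real.sign (Bf A c₁ (vec n + a)) - Real.sign (Bf A c₂ (vec n + a)) : ℝ) : ℂ) *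
          (ph (Bf A (vec n) b) * qp τ ((N : ℝ) * Qf A (vec n + a))) := by
  set F : ℤ × ℤ → ℂ := fun n => ph (Bf A (vec n) b) * qp τ ((N : ℝ) * Qf A (vec n + a))
  have hF : ∀ n, ‖F n‖ ≤ ‖qp τ ((N : ℝ) * Qf A (vec n + a))‖ := fun n => by
    simp [F, norm_ph]
  have hterm : ∀ n : ℤ × ℤ,
      (if 0 ≤ n.1 ∧ 0 ≤ n.2 then F n else 0) - (if n.1 < 0 ∧ n.2 < 0 then F n else 0) =
        ((sign k / 2 : ℝ) : ℂ) *
          (((sign (Bf A c₁ (vec n + a)) - sign (Bf A c₂ (vec n + a)) : ℝ) : ℂ) * F n) := by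
    intro n
    rw [← mul_assoc, ← ofReal_mul,
      sign_half_mul_sign_Bf_sub_sign_Bf A hk hkk' hc₁ hc₂ ha0 ha0' ha1 ha1' n]
    split_ifs <;> simp
  rw [← (summable_ite_of_norm_le hF hsum1).tsum_sub (summable_ite_of_norm_le hF hsum2),
    tsum_congr hterm, tsum_mul_left]

/-- The graded trace of the cone vertex algebra module equals
`sgn(k)·e^{-2πiB(a,b)}/(2η(τ)²)` times the indefinite theta `Θ_{a,b}(Nτ)`, written with the
eta factors cancelled: the paper's Lemma, for `0 < a₁, a₂ < 1`. -/
theorem cone_trace_eq_indefinite_theta_interior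
    (A : Matrix (Fin 2) (Fin 2) ℝ) (hA : A.IsSymm)
    (hAint : ∀ i j, ∃ m : ℤ, A i j = (m : ℝ))
    (N : ℕ) (hN : 0 < N)
    (c₁ c₂ : Fin 2 → ℝ) (k k' : ℝ) (hk : k ≠ 0) (hk' : k' ≠ 0)
    (hkk' : Real.sign k = Real.sign k')
    (hc₁ : Matrix.vecMul c₁ A = k • ![1, 0])
    (hc₂ : Matrix.vecMul c₂ A = k' • ![0, -1])
    (a : Fin 2 → ℝ) (haQ : ∀ i, ∃ r : ℚ, a i = (r : ℝ))
    (ha0 : 0 < a 0) (ha0' : a 0 < 1) (ha1 : 0 < a 1) (ha1' : a 1 < 1)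
    (b : Fin 2 → ℝ) (τ : ℂ) (hτ : 0 < τ.im)
    (hsum1 : Summable fun n : ℤ × ℤ =>
      if 0 ≤ n.1 ∧ 0 ≤ n.2 then ‖qp τ ((N : ℝ) * Qf A (vec n + a))‖ else 0)
    (hsum2 : Summable fun n : ℤ × ℤ =>
      if n.1 < 0 ∧ n.2 < 0 then ‖qp τ ((N : ℝ) * Qf A (vec n + a))‖ else 0) :
    (∑' n : ℤ × ℤ, if 0 ≤ n.1 ∧ 0 ≤ n.2 then
        ph (Bf A (vec n) b) * qp τ ((N : ℝ) * Qf A (vec n + a)) else 0) -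
      (∑' n : ℤ × ℤ, if n.1 < 0 ∧ n.2 < 0 then
        ph (Bf A (vec n) b) * qp τ ((N : ℝ) * Qf A (vec n + a)) else 0) =
    ((Real.sign k / 2 : ℝ) : ℂ) *
      ∑' n : ℤ × ℤ,
        ((Real.sign (Bf A c₁ (vec n + a)) - Real.sign (Bf A c₂ (vec n + a)) : ℝ) : ℂ) *
          (ph (Bf A (vec n) b) * qp τ ((N : ℝ) * Qf A (vec n + a))) :=
  cone_trace_eq_indefinite_theta_interior_general A N c₁ c₂ k k' hk hkk' hc₁ hc₂ a ha0 ha0' ha1 ha1'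
    b τ hsum1 hsum2
end

section
/- Let m be a positive integer, τ ∈ ℍ, and z ∈ ℂ with 0 < |Im z| < Im τ; set α := Im(z)/Im(τ) and y := e^{2πiz}. Then Σ_{k∈ℤ} y^{2km} q^{mk²} (y q^k + 1)/(y q^k − 1) = − Σ_{(k,l)∈ℤ²} ( sgn(k+α) + sgn(l) ) y^{2mk+l} q^{mk² + kl}, and both series converge absolutely. (This is the identity μ_{m,0}(z,τ) = −Θ⁺_{A,c₁,c₂}(z,0;τ) of the paper, for the quadratic form with matrix A = [[2m,1],[1,0]] and the null vectors c₁ = (0,1), c₂ = (−1,2m).) -/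
open Complex Real

/-!
For fixed `k` put `w = y q^k`. Since `‖w‖ = e^{-2π Im τ (k + α)}`, we have `‖w‖ < 1` exactly when
`k + α > 0`, and expanding `(1 + w)/(1 - w)` as a geometric series in `w` (in `w⁻¹` when `‖w‖ > 1`)
gives `Σ_l (sgn(k + α) + sgn l) w^l`. Multiplied by `y^{2km} q^{mk²}`, this turns the `k`-th
Appell–Lerch summand into minus the `k`-th row of the theta series. The double series converges
absolutely: a nonzero coefficient forces `l (k + α) ≥ δ |l|`, where `δ > 0` is the distance from
`α` to `ℤ`, so its terms are dominated by a Gaussian in `k + α` times `e^{-2π Im τ δ |l|}`. Summing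
by rows gives the identity.
-/

lemma hasSum_one_add_sign_mul_zpow {w : ℂ} (hw : ‖w‖ < 1) :
    HasSum (fun l : ℤ => ((1 + Real.sign (l : ℝ) : ℝ) : ℂ) * w ^ l) ((1 + w) / (1 - w)) := by
  have h1w : 1 - w ≠ 0 := sub_ne_zero.mpr fun h => by simp [← h] at hw
  have hpos : HasSum (fun n : ℕ => ((1 + Real.sign ((n + 1 : ℕ) : ℝ) : ℝ) : ℂ) * w ^ (n + 1))
      (2 * w * (1 - w)⁻¹) := by
    refine ((hasSum_geometric_of_norm_lt_one hw).mul_left (2 * w)).congr_fun fun n => ?_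
    rw [Real.sign_of_pos (by positivity)]
    push_cast
    ring
  have hnat : HasSum (fun n : ℕ => ((1 + Real.sign (n : ℝ) : ℝ) : ℂ) * w ^ n)
      ((1 + w) / (1 - w)) := by
    have h := (hasSum_nat_add_iff (f := fun n : ℕ => ((1 + Real.sign (n : ℝ) : ℝ) : ℂ) * w ^ n)
      1).mp hpos
    rwa [Finset.sum_range_one, Nat.cast_zero, Real.sign_zero, pow_zero,
      show 2 * w * (1 - w)⁻¹ + ((1 + 0 : ℝ) : ℂ) * 1 = (1 + w) / (1 - w) by
        field_simp; push_cast; ring] at h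
  have hneg : HasSum (fun n : ℕ => ((1 + Real.sign ((-(n + 1 : ℤ) : ℤ) : ℝ) : ℝ) : ℂ) *
      w ^ (-(n + 1 : ℤ))) 0 := by
    refine hasSum_zero.congr_fun fun n => ?_
    rw [Real.sign_of_neg (by push_cast; linarith)]
    simp
  simpa using HasSum.of_nat_of_neg_add_one
    (f := fun l : ℤ => ((1 + Real.sign (l : ℝ) : ℝ) : ℂ) * w ^ l) (by simpa using hnat) hneg

lemma hasSum_sign_sub_one_mul_zpow {w : ℂ} (hw : 1 < ‖w‖) :
    HasSum (fun l : ℤ => ((Real.sign (l : ℝ) - 1 : ℝ) : ℂ) * w ^ l) ((1 + w) / (1 - w)) := by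
  have hw0 : w ≠ 0 := norm_pos_iff.mp (one_pos.trans hw)
  have hw' : ‖w⁻¹‖ < 1 := by rwa [norm_inv, inv_lt_one₀ (one_pos.trans hw)]
  have h := ((Equiv.neg ℤ).hasSum_iff.mpr (hasSum_one_add_sign_mul_zpow hw')).neg
  have hval : -((1 + w⁻¹) / (1 - w⁻¹)) = (1 + w) / (1 - w) := by
    have hw1 : w - 1 ≠ 0 := sub_ne_zero.mpr fun h => by simp [h] at hw
    have hw1' : 1 - w ≠ 0 := sub_ne_zero.mpr fun h => by simp [← h] at hw
    rw [show 1 - w⁻¹ = (w - 1) / w by field_simp, show 1 + w⁻¹ = (w + 1) / w by field_simp]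
    field_simp
    ring
  rw [hval] at h
  refine h.congr_fun fun l => ?_
  simp only [Function.comp_apply, Equiv.neg_apply, Int.cast_neg, Real.sign_neg, zpow_neg, inv_zpow',
    inv_inv]
  push_cast
  ring

lemma hasSum_sign_add_sign_mul_zpow {w : ℂ} {c x : ℝ} (hc : 0 < c) (hx : x ≠ 0)
    (hw : ‖w‖ = rexp (-(c * x))) :
    HasSum (fun l : ℤ => ((Real.sign x + Real.sign (l : ℝ) : ℝ) : ℂ) * w ^ l)
      ((1 + w) / (1 - w)) := by
  rcases hx.lt_or_gt with hx | hx
  · rw [Real.sign_of_neg hx]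
    refine (hasSum_sign_sub_one_mul_zpow ?_).congr_fun fun l => by push_cast; ring
    rw [hw, Real.one_lt_exp_iff]
    nlinarith
  · rw [Real.sign_of_pos hx]
    refine (hasSum_one_add_sign_mul_zpow ?_).congr_fun fun l => by push_cast; ring
    rw [hw, Real.exp_lt_one_iff]
    nlinarith

lemma mul_nonneg_of_sign_add_sign_ne_zero {x y : ℝ} (h : Real.sign x + Real.sign y ≠ 0) :
    0 ≤ x * y := by
  by_contra! hxy
  rcases mul_neg_iff.mp hxy with ⟨hx, hy⟩ | ⟨hx, hy⟩
  · simp [Real.sign_of_pos hx, Real.sign_of_neg hy] at h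
  · simp [Real.sign_of_neg hx, Real.sign_of_pos hy] at h

lemma abs_sign_add_sign_mul_exp_le {u δ b : ℝ} (hb : 0 ≤ b) (hδ : δ ≤ |u|) (l : ℝ) :
    |Real.sign u + Real.sign l| * rexp (-(b * (u * l))) ≤ 2 * rexp (-(b * (δ * |l|))) := by
  by_cases h : Real.sign u + Real.sign l = 0
  · rw [h, abs_zero, zero_mul]
    positivity
  have hcoef : |Real.sign u + Real.sign l| ≤ 2 := by
    refine (abs_add_le _ _).trans ?_
    rcases Real.sign_apply_eq u with hu | hu | hu <;>
      rcases Real.sign_apply_eq l with hl | hl | hl <;> norm_num [hu, hl]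
  have hul : δ * |l| ≤ u * l := by
    rw [← abs_of_nonneg (mul_nonneg_of_sign_add_sign_ne_zero h), abs_mul]
    exact mul_le_mul_of_nonneg_right hδ (abs_nonneg l)
  gcongr

lemma exists_pos_le_abs_int_add {α : ℝ} (hα : ∀ k : ℤ, (k : ℝ) + α ≠ 0) :
    ∃ δ > 0, ∀ k : ℤ, δ ≤ |k + α| := by
  have hf : Int.fract α ≠ 0 := fun h => hα (-⌊α⌋) (by
    rw [Int.cast_neg, neg_add_eq_sub, Int.self_sub_floor, h])
  refine ⟨min (Int.fract α) (1 - Int.fract α),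
    lt_min ((Int.fract_nonneg α).lt_of_ne' hf) (by linarith [Int.fract_lt_one α]), fun k => ?_⟩
  have hk : (k : ℝ) + α = ((k + ⌊α⌋ : ℤ) : ℝ) + Int.fract α := by
    push_cast; linarith [Int.floor_add_fract α]
  rcases le_or_gt 0 (k + ⌊α⌋) with hj | hj
  · have hj' : (0 : ℝ) ≤ ((k + ⌊α⌋ : ℤ) : ℝ) := by exact_mod_cast hj
    rw [hk, abs_of_nonneg (by linarith [Int.fract_nonneg α])]
    linarith [min_le_left (Int.fract α) (1 - Int.fract α)]
  · have hj' : ((k + ⌊α⌋ : ℤ) : ℝ) ≤ -1 := by exact_mod_cast (by omega : k + ⌊α⌋ ≤ -1)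
    rw [hk, abs_of_neg (by linarith [Int.fract_lt_one α])]
    linarith [min_le_right (Int.fract α) (1 - Int.fract α)]

lemma summable_exp_neg_mul_int_add_sq {c : ℝ} (hc : 0 < c) (α : ℝ) :
    Summable fun k : ℤ => rexp (-(c * (k + α) ^ 2)) := by
  have hθ := ((summable_jacobiTheta₂_term_iff ((α * c / π : ℝ) * I) ((c / π : ℝ) * I)).mpr
    (by rw [mul_I_im, ofReal_re]; positivity)).norm.mul_left (rexp (-(c * α ^ 2)))
  refine hθ.congr fun k => ?_
  rw [norm_jacobiTheta₂_term, ← Real.exp_add]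
  congr 1
  simp only [mul_I_im, ofReal_re]
  field_simp
  ring

lemma summable_exp_neg_mul_abs_int {c : ℝ} (hc : 0 < c) :
    Summable fun l : ℤ => rexp (-(c * |(l : ℝ)|)) := by
  have hnat : Summable fun n : ℕ => rexp (-(c * n)) := by
    simpa only [← Real.exp_nat_mul, mul_neg, mul_comm] using summable_geometric_of_lt_one
      (Real.exp_nonneg (-c)) (Real.exp_lt_one_iff.mpr (neg_lt_zero.mpr hc))
  exact Summable.of_nat_of_neg (by simpa using hnat) (by simpa using hnat)

lemma summable_norm_of_hasSum_fiberwise {β γ E : Type*} [NormedAddCommGroup E] [CompleteSpace E]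
    {f : β × γ → E} {g : β → E} (hf : Summable fun n => ‖f n‖)
    (hg : ∀ b, HasSum (fun c => f (b, c)) (g b)) : Summable fun b => ‖g b‖ :=
  hf.prod.of_nonneg_of_le (fun _ => norm_nonneg _) fun b =>
    (hg b).tsum_eq ▸ norm_tsum_le_tsum_norm (hf.prod_factor b)

lemma norm_qp (τ : ℂ) (c : ℝ) : ‖qp τ c‖ = rexp (-(2 * π * τ.im * c)) := by
  rw [qp, norm_exp]
  congr 1
  simp only [mul_re, mul_im, ofReal_re, ofReal_im, I_re, I_im, re_ofNat, im_ofNat]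
  ring

lemma qp_add (τ : ℂ) (c d : ℝ) : qp τ (c + d) = qp τ c * qp τ d := by
  rw [qp, qp, qp, ← Complex.exp_add]
  push_cast
  ring_nf

lemma qp_zpow (τ : ℂ) (c : ℝ) (l : ℤ) : qp τ c ^ l = qp τ (l * c) := by
  rw [qp, qp, ← Complex.exp_int_mul]
  push_cast
  ring_nf

noncomputable def appellLerchTerm (m : ℕ) (τ y : ℂ) (k : ℤ) : ℂ :=
  y ^ (2 * k * (m : ℤ)) * qp τ ((m : ℝ) * (k : ℝ) ^ 2) *
    ((y * qp τ (k : ℝ) + 1) / (y * qp τ (k : ℝ) - 1))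

noncomputable def indefiniteThetaTerm (m : ℕ) (τ y : ℂ) (α : ℝ) (n : ℤ × ℤ) : ℂ :=
  ((Real.sign ((n.1 : ℝ) + α) + Real.sign (n.2 : ℝ) : ℝ) : ℂ) *
    (y ^ (2 * (m : ℤ) * n.1 + n.2) * qp τ ((m : ℝ) * (n.1 : ℝ) ^ 2 + (n.1 : ℝ) * (n.2 : ℝ)))

section

variable (m : ℕ) {τ y : ℂ} {α : ℝ}

lemma norm_zpow_mul_qp (hy : ‖y‖ = rexp (-(2 * π * τ.im * α))) (n : ℤ) (c : ℝ) :
    ‖y ^ n * qp τ c‖ = rexp (-(2 * π * τ.im * (n * α + c))) := by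
  rw [norm_mul, norm_zpow, hy, norm_qp, ← Real.rpow_intCast, ← Real.exp_mul,
    ← Real.exp_add]
  ring_nf

lemma zpow_mul_qp_eq_mul_zpow (hy : y ≠ 0) (k l : ℤ) :
    y ^ (2 * (m : ℤ) * k + l) * qp τ ((m : ℝ) * (k : ℝ) ^ 2 + (k : ℝ) * (l : ℝ)) =
      y ^ (2 * k * (m : ℤ)) * qp τ ((m : ℝ) * (k : ℝ) ^ 2) * (y * qp τ (k : ℝ)) ^ l := by
  rw [mul_zpow, qp_zpow, zpow_add₀ hy, qp_add]
  ring_nf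

lemma hasSum_indefiniteThetaTerm_row (hτ : 0 < τ.im) (hy : ‖y‖ = rexp (-(2 * π * τ.im * α)))
    {k : ℤ} (hk : (k : ℝ) + α ≠ 0) :
    HasSum (fun l : ℤ => indefiniteThetaTerm m τ y α (k, l)) (-appellLerchTerm m τ y k) := by
  have hy0 : y ≠ 0 := norm_pos_iff.mp (hy ▸ Real.exp_pos _)
  have hw : ‖y * qp τ k‖ = rexp (-(2 * π * τ.im * (k + α))) := by
    simpa [add_comm] using norm_zpow_mul_qp hy 1 k
  have h := (hasSum_sign_add_sign_mul_zpow (by positivity) hk hw).mul_left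
    (y ^ (2 * k * (m : ℤ)) * qp τ ((m : ℝ) * (k : ℝ) ^ 2))
  rw [appellLerchTerm, ← mul_neg, ← div_neg, neg_sub, add_comm (y * _)]
  refine h.congr_fun fun l => ?_
  rw [indefiniteThetaTerm, zpow_mul_qp_eq_mul_zpow m hy0]
  ring

-- `(2mk + l)α + mk² + kl = m(k + α)² - mα² + (k + α)l`
lemma norm_indefiniteThetaTerm_le (hτ : 0 < τ.im) (hy : ‖y‖ = rexp (-(2 * π * τ.im * α)))
    {δ : ℝ} {k : ℤ} (hδ : δ ≤ |k + α|) (l : ℤ) :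
    ‖indefiniteThetaTerm m τ y α (k, l)‖ ≤ rexp (2 * π * τ.im * m * α ^ 2) *
      (rexp (-(2 * π * τ.im * m * (k + α) ^ 2)) *
        (2 * rexp (-(2 * π * τ.im * (δ * |(l : ℝ)|))))) := by
  have hexp : rexp (-(2 * π * τ.im * (((2 * (m : ℤ) * k + l : ℤ) : ℝ) * α +
      ((m : ℝ) * (k : ℝ) ^ 2 + (k : ℝ) * (l : ℝ))))) = rexp (2 * π * τ.im * m * α ^ 2) *
      (rexp (-(2 * π * τ.im * m * (k + α) ^ 2)) * rexp (-(2 * π * τ.im * ((k + α) * l)))) := by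
    rw [← Real.exp_add, ← Real.exp_add]
    push_cast
    ring_nf
  rw [indefiniteThetaTerm, norm_mul, norm_zpow_mul_qp hy, norm_real, Real.norm_eq_abs, hexp,
    mul_left_comm, mul_left_comm _ (rexp _)]
  refine mul_le_mul_of_nonneg_left (mul_le_mul_of_nonneg_left ?_ (Real.exp_pos _).le)
    (Real.exp_pos _).le
  exact abs_sign_add_sign_mul_exp_le (by positivity) hδ l

lemma summable_norm_indefiniteThetaTerm (hm : 0 < m) (hτ : 0 < τ.im)
    (hy : ‖y‖ = rexp (-(2 * π * τ.im * α))) (hα : ∀ k : ℤ, (k : ℝ) + α ≠ 0) :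
    Summable fun n => ‖indefiniteThetaTerm m τ y α n‖ := by
  obtain ⟨δ, hδ, hδk⟩ := exists_pos_le_abs_int_add hα
  have hgauss := summable_exp_neg_mul_int_add_sq (by positivity : 0 < 2 * π * τ.im * m) α
  have hgeom := (summable_exp_neg_mul_abs_int (by positivity : 0 < 2 * π * τ.im * δ)).mul_left 2
  have hbound := (hgauss.mul_of_nonneg hgeom (fun _ => (Real.exp_pos _).le)
    (fun _ => by positivity)).mul_left (rexp (2 * π * τ.im * m * α ^ 2))
  refine hbound.of_nonneg_of_le (fun _ => norm_nonneg _) fun ⟨k, l⟩ => ?_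
  simpa only [mul_assoc] using norm_indefiniteThetaTerm_le m hτ hy (hδk k) l

end

/-- For `0 < |Im z| < Im τ`, the specialized Appell–Lerch sum `μ_{m,0}(z,τ)` equals minus
the holomorphic indefinite theta function `Θ⁺_{A,c₁,c₂}(z,0;τ)` for `A = [[2m,1],[1,0]]`,
`c₁ = (0,1)`, `c₂ = (-1,2m)`:
`Σ_{k∈ℤ} y^{2km} q^{mk²} (yq^k+1)/(yq^k-1)
  = - Σ_{(k,l)∈ℤ²} (sgn(k+α)+sgn(l)) y^{2mk+l} q^{mk²+kl}` with `α = Im z / Im τ`. -/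
theorem specialized_appell_lerch_eq_neg_indefinite_theta
    (m : ℕ) (hm : 0 < m) (τ z : ℂ) (hτ : 0 < τ.im)
    (hz0 : 0 < |z.im|) (hz1 : |z.im| < τ.im)
    (y : ℂ) (hy : y = Complex.exp (2 * Real.pi * Complex.I * z)) :
    Summable (fun k : ℤ =>
      ‖y ^ (2 * k * (m : ℤ)) * qp τ ((m : ℝ) * (k : ℝ) ^ 2) *
        ((y * qp τ (k : ℝ) + 1) / (y * qp τ (k : ℝ) - 1))‖) ∧
    Summable (fun n : ℤ × ℤ =>
      ‖((Real.sign ((n.1 : ℝ) + z.im / τ.im) + Real.sign (n.2 : ℝ) : ℝ) : ℂ) *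
        (y ^ (2 * (m : ℤ) * n.1 + n.2) *
          qp τ ((m : ℝ) * (n.1 : ℝ) ^ 2 + (n.1 : ℝ) * (n.2 : ℝ)))‖) ∧
    (∑' k : ℤ, y ^ (2 * k * (m : ℤ)) * qp τ ((m : ℝ) * (k : ℝ) ^ 2) *
        ((y * qp τ (k : ℝ) + 1) / (y * qp τ (k : ℝ) - 1))) =
      -∑' n : ℤ × ℤ,
        ((Real.sign ((n.1 : ℝ) + z.im / τ.im) + Real.sign (n.2 : ℝ) : ℝ) : ℂ) *
          (y ^ (2 * (m : ℤ) * n.1 + n.2) *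
            qp τ ((m : ℝ) * (n.1 : ℝ) ^ 2 + (n.1 : ℝ) * (n.2 : ℝ))) := by
  have hyα : ‖y‖ = rexp (-(2 * π * τ.im * (z.im / τ.im))) := by
    rw [hy, norm_exp, mul_assoc _ τ.im, mul_div_cancel₀ _ hτ.ne']
    congr 1
    simp only [mul_re, mul_im, ofReal_re, ofReal_im, I_re, I_im, re_ofNat, im_ofNat]
    ring
  have hα : ∀ k : ℤ, (k : ℝ) + z.im / τ.im ≠ 0 := by
    intro k hk
    have hk' : |(k : ℝ)| = |z.im| / τ.im := by
      rw [← abs_of_pos hτ, ← abs_div, eq_neg_of_add_eq_zero_left hk, abs_neg]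
    have hk0 : 0 < |k| := by exact_mod_cast hk' ▸ div_pos hz0 hτ
    have hk1 : |k| < 1 := by exact_mod_cast hk' ▸ (div_lt_one hτ).mpr hz1
    exact hk0.ne' (abs_eq_zero.mpr (Int.abs_lt_one_iff.mp hk1))
  have hF := summable_norm_indefiniteThetaTerm m hm hτ hyα hα
  have hrow k := hasSum_indefiniteThetaTerm_row m hτ hyα (hα k)
  refine ⟨(summable_norm_of_hasSum_fiberwise hF hrow).congr fun k => norm_neg _, hF, ?_⟩
  change ∑' k, appellLerchTerm m τ y k = -∑' n, indefiniteThetaTerm m τ y (z.im / τ.im) n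
  rw [← (hF.of_norm.hasSum.prod_fiberwise hrow).tsum_eq, tsum_neg, neg_neg]
end

section
/- Let m be a positive integer, τ ∈ ℍ, and z ∈ ℂ with 0 < Im z < Im τ; set y := e^{2πiz}. Then Σ_{k∈ℤ} y^{2km+1} q^{mk² + k} / (1 − y q^k) = Σ_{k≥0, l≥1} y^{2km+l} q^{mk² + kl} − Σ_{k<0, l≤0} y^{2km+l} q^{mk² + kl}, where all three series converge absolutely (k, l range over ℤ subject to the stated inequalities). -/
/-!
For fixed `k` the terms `y^{2km+l} q^{mk²+kl}` form a geometric progression in `l` with ratio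
`w = y q^k`. Since `|w| < 1` for `k ≥ 0` and `|w| > 1` for `k < 0`, the row over `l ≥ 1` sums to
`y^{2km+1} q^{mk²+k} / (1 - w)`, and the row over `l ≤ 0` to its negative. Both cones converge
absolutely: the row factor is dominated by a geometric series in `l`, and the remaining factor
`|y|^{2km} |q|^{mk²}` by a theta series in `k`; summing each cone row by row gives the identity.
-/

open Complex Real

open Filter Topology Function Function.Periodic

lemma summable_pow_mul_pow_sq {a r : ℝ} (ha : 0 ≤ a) (hr0 : 0 ≤ r) (hr1 : r < 1) :
    Summable fun n : ℕ => a ^ n * r ^ (n ^ 2) := by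
  have hlim : Tendsto (fun n : ℕ => a * r ^ n) atTop (𝓝 0) := by
    simpa using (tendsto_pow_atTop_nhds_zero_of_lt_one hr0 hr1).const_mul a
  refine .of_norm_bounded_eventually_nat summable_geometric_two ?_
  filter_upwards [hlim.eventually_le_const one_half_pos] with n hn
  rw [Real.norm_of_nonneg (by positivity), sq, pow_mul, ← mul_pow]
  exact pow_le_pow_left₀ (by positivity) hn n

lemma summable_zpow_mul_zpow_sq {a r : ℝ} (ha : 0 < a) (hr0 : 0 ≤ r) (hr1 : r < 1) :
    Summable fun k : ℤ => a ^ k * r ^ (k ^ 2) := by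
  refine .of_nat_of_neg ?_ ?_
  · simpa [← zpow_natCast] using summable_pow_mul_pow_sq ha.le hr0 hr1
  · simpa [← zpow_natCast] using summable_pow_mul_pow_sq (inv_nonneg.2 ha.le) hr0 hr1

lemma Function.Injective.hasSum_ite_iff {α β γ : Type*} [AddCommMonoid α] [TopologicalSpace α]
    {g : γ → β} (hg : Injective g) {p : β → Prop} [DecidablePred p]
    (hp : ∀ b, p b ↔ b ∈ Set.range g) (f : β → α) {a : α} :
    HasSum (fun b => if p b then f b else 0) a ↔ HasSum (f ∘ g) a := by
  rw [← hg.hasSum_iff fun b hb => if_neg (mt (hp b).1 hb)]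
  have hfg : (fun b => if p b then f b else 0) ∘ g = f ∘ g :=
    funext fun c => if_pos ((hp _).2 ⟨c, rfl⟩)
  rw [hfg]

lemma Summable.norm_prod_fiberwise {α β E : Type*} [NormedAddCommGroup E]
    {f : α × β → E} {g : α → E} (hf : Summable fun p => ‖f p‖)
    (hg : ∀ a, HasSum (fun b => f (a, b)) (g a)) : Summable fun a => ‖g a‖ :=
  hf.prod.of_nonneg_of_le (fun _ => norm_nonneg _) fun a =>
    (hg a).tsum_eq ▸ norm_tsum_le_tsum_norm (hf.prod_factor a)

section ConeTerm

variable {𝕜 : Type*} [NormedField 𝕜] {y Q : 𝕜} {m : ℕ}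

@[irreducible]
def coneTerm (y Q : 𝕜) (m : ℕ) (k l : ℤ) : 𝕜 := y ^ (2 * k * m + l) * Q ^ (m * k ^ 2 + k * l)

lemma coneTerm_eq_mul_zpow (hy : y ≠ 0) (hQ : Q ≠ 0) (k l : ℤ) :
    coneTerm y Q m k l = coneTerm y Q m k 0 * (y * Q ^ k) ^ l := by
  simp only [coneTerm, add_zero, mul_zero, mul_zpow, ← zpow_mul, zpow_add₀ hy, zpow_add₀ hQ]
  ring

lemma coneTerm_one_add_natCast (hy : y ≠ 0) (hQ : Q ≠ 0) (k : ℤ) (b : ℕ) :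
    coneTerm y Q m k (1 + b) = coneTerm y Q m k 1 * (y * Q ^ k) ^ b := by
  rw [coneTerm_eq_mul_zpow hy hQ, coneTerm_eq_mul_zpow hy hQ k 1,
    zpow_add₀ (mul_ne_zero hy (zpow_ne_zero k hQ)), zpow_one, zpow_natCast]
  ring

lemma coneTerm_neg_natCast (hy : y ≠ 0) (hQ : Q ≠ 0) (k : ℤ) (b : ℕ) :
    coneTerm y Q m k (-b) = coneTerm y Q m k 0 * (y * Q ^ k)⁻¹ ^ b := by
  rw [coneTerm_eq_mul_zpow hy hQ, zpow_neg, zpow_natCast, inv_pow]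

lemma coneTerm_eq_theta (hy : y ≠ 0) (hQ : Q ≠ 0) (k l : ℤ) :
    coneTerm y Q m k l = y ^ l * ((y ^ (2 * m) * Q ^ l) ^ k * (Q ^ m) ^ (k ^ 2)) := by
  simp only [coneTerm, mul_zpow, ← zpow_natCast, ← zpow_mul, zpow_add₀ hy, zpow_add₀ hQ]
  push_cast
  ring_nf

lemma summable_norm_coneTerm (hm : 0 < m) (hy : y ≠ 0) (hQ : Q ≠ 0) (hQ1 : ‖Q‖ < 1) (l : ℤ) :
    Summable fun k : ℤ => ‖coneTerm y Q m k l‖ := by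
  simp_rw [coneTerm_eq_theta hy hQ, norm_mul, norm_zpow]
  have ha : 0 < ‖y ^ (2 * m) * Q ^ l‖ :=
    norm_pos_iff.2 (mul_ne_zero (pow_ne_zero _ hy) (zpow_ne_zero _ hQ))
  have hr : ‖Q ^ m‖ < 1 := by
    rw [norm_pow]
    exact pow_lt_one₀ (norm_nonneg Q) hQ1 hm.ne'
  exact (summable_zpow_mul_zpow_sq ha (norm_nonneg _) hr).mul_left _

lemma norm_mul_zpow_natCast_le (hQ1 : ‖Q‖ ≤ 1) (a : ℕ) : ‖y * Q ^ (a : ℤ)‖ ≤ ‖y‖ := by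
  rw [norm_mul, zpow_natCast, norm_pow]
  exact mul_le_of_le_one_right (norm_nonneg y) (pow_le_one₀ (norm_nonneg Q) hQ1)

lemma norm_inv_mul_zpow_neg_le (hQ1 : ‖Q‖ ≤ 1) (a : ℕ) :
    ‖(y * Q ^ (-((a : ℤ) + 1)))⁻¹‖ ≤ ‖Q‖ / ‖y‖ := by
  rw [zpow_neg, mul_inv, inv_inv, norm_mul, norm_inv, ← Nat.cast_succ, zpow_natCast, norm_pow,
    inv_mul_eq_div]
  exact div_le_div_of_nonneg_right (pow_le_of_le_one (norm_nonneg Q) hQ1 a.succ_ne_zero)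
    (norm_nonneg y)

lemma hasSum_coneTerm_one_add (hy : y ≠ 0) (hQ : Q ≠ 0) (hQ1 : ‖Q‖ ≤ 1) (hy1 : ‖y‖ < 1) (a : ℕ) :
    HasSum (fun b : ℕ => coneTerm y Q m a (1 + b))
      (coneTerm y Q m a 1 / (1 - y * Q ^ (a : ℤ))) := by
  have hw := (norm_mul_zpow_natCast_le hQ1 a).trans_lt hy1
  simpa only [coneTerm_one_add_natCast hy hQ, div_eq_mul_inv]
    using (hasSum_geometric_of_norm_lt_one hw).mul_left (coneTerm y Q m a 1)

lemma hasSum_coneTerm_neg (hQ : Q ≠ 0) (hQy : ‖Q‖ < ‖y‖) (hQ1 : ‖Q‖ ≤ 1) (a : ℕ) :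
    HasSum (fun b : ℕ => coneTerm y Q m (-(a + 1)) (-b))
      (-(coneTerm y Q m (-(a + 1)) 1 / (1 - y * Q ^ (-((a : ℤ) + 1))))) := by
  have hy : y ≠ 0 := norm_pos_iff.1 ((norm_nonneg Q).trans_lt hQy)
  set k : ℤ := -((a : ℤ) + 1)
  have hw : ‖(y * Q ^ k)⁻¹‖ < 1 :=
    (norm_inv_mul_zpow_neg_le hQ1 a).trans_lt ((div_lt_one (norm_pos_iff.2 hy)).2 hQy)
  have hw1 : y * Q ^ k - 1 ≠ 0 := by
    intro h
    rw [sub_eq_zero.1 h, inv_one, norm_one] at hw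
    exact hw.false
  have hval : coneTerm y Q m k 0 * (1 - (y * Q ^ k)⁻¹)⁻¹ =
      -(coneTerm y Q m k 1 / (1 - y * Q ^ k)) := by
    rw [coneTerm_eq_mul_zpow hy hQ k 1, zpow_one, ← neg_sub (y * Q ^ k), div_neg, neg_neg]
    field_simp
  rw [← hval]
  exact ((hasSum_geometric_of_norm_lt_one hw).mul_left _).congr_fun (coneTerm_neg_natCast hy hQ k)

lemma summable_norm_coneTerm_one_add (hm : 0 < m) (hy : y ≠ 0) (hQ : Q ≠ 0) (hQ1 : ‖Q‖ < 1)
    (hy1 : ‖y‖ < 1) : Summable fun p : ℕ × ℕ => ‖coneTerm y Q m p.1 (1 + p.2)‖ := by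
  refine .of_nonneg_of_le (fun _ => norm_nonneg _) (fun p => ?_)
    (((summable_norm_coneTerm hm hy hQ hQ1 1).comp_injective Nat.cast_injective).mul_of_nonneg
      (summable_geometric_of_lt_one (norm_nonneg y) hy1) (fun _ => norm_nonneg _)
      (fun _ => by positivity))
  rw [coneTerm_one_add_natCast hy hQ, norm_mul, norm_pow]
  exact mul_le_mul_of_nonneg_left
    (pow_le_pow_left₀ (norm_nonneg _) (norm_mul_zpow_natCast_le hQ1.le _) _) (norm_nonneg _)

lemma summable_norm_coneTerm_neg (hm : 0 < m) (hQ : Q ≠ 0) (hQy : ‖Q‖ < ‖y‖) (hQ1 : ‖Q‖ < 1) :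
    Summable fun p : ℕ × ℕ => ‖coneTerm y Q m (-(p.1 + 1)) (-p.2)‖ := by
  have hy : y ≠ 0 := norm_pos_iff.1 ((norm_nonneg Q).trans_lt hQy)
  have hinj : Injective fun a : ℕ => -((a : ℤ) + 1) := fun a b h => by simpa using h
  refine .of_nonneg_of_le (fun _ => norm_nonneg _) (fun p => ?_)
    (((summable_norm_coneTerm hm hy hQ hQ1 0).comp_injective hinj).mul_of_nonneg
      (summable_geometric_of_lt_one (by positivity) ((div_lt_one (norm_pos_iff.2 hy)).2 hQy))
      (fun _ => norm_nonneg _) (fun _ => by positivity))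
  rw [coneTerm_neg_natCast hy hQ, norm_mul, norm_pow]
  exact mul_le_mul_of_nonneg_left
    (pow_le_pow_left₀ (norm_nonneg _) (norm_inv_mul_zpow_neg_le hQ1.le _) _) (norm_nonneg _)

theorem summable_norm_coneTerm_div (hm : 0 < m) (hQ : Q ≠ 0) (hQy : ‖Q‖ < ‖y‖) (hy1 : ‖y‖ < 1) :
    Summable fun k : ℤ => ‖coneTerm y Q m k 1 / (1 - y * Q ^ k)‖ := by
  have hy : y ≠ 0 := norm_pos_iff.1 ((norm_nonneg Q).trans_lt hQy)
  have hQ1 : ‖Q‖ < 1 := hQy.trans hy1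
  have hpos := (summable_norm_coneTerm_one_add hm hy hQ hQ1 hy1).norm_prod_fiberwise
    (hasSum_coneTerm_one_add hy hQ hQ1.le hy1)
  have hneg := (summable_norm_coneTerm_neg hm hQ hQy hQ1).norm_prod_fiberwise
    (hasSum_coneTerm_neg hQ hQy hQ1.le)
  simp only [norm_neg] at hneg
  exact .of_nat_of_neg_add_one hpos hneg

theorem hasSum_coneTerm_div [CompleteSpace 𝕜] (hm : 0 < m) (hQ : Q ≠ 0) (hQy : ‖Q‖ < ‖y‖)
    (hy1 : ‖y‖ < 1) :
    HasSum (fun k : ℤ => coneTerm y Q m k 1 / (1 - y * Q ^ k))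
      ((∑' p : ℕ × ℕ, coneTerm y Q m p.1 (1 + p.2)) -
        ∑' p : ℕ × ℕ, coneTerm y Q m (-(p.1 + 1)) (-p.2)) := by
  have hy : y ≠ 0 := norm_pos_iff.1 ((norm_nonneg Q).trans_lt hQy)
  have hQ1 : ‖Q‖ < 1 := hQy.trans hy1
  have hF := (summable_norm_coneTerm_one_add hm hy hQ hQ1 hy1).of_norm.hasSum
  have hG := (summable_norm_coneTerm_neg hm hQ hQy hQ1).of_norm.hasSum
  have hpos := hF.prod_fiberwise (hasSum_coneTerm_one_add hy hQ hQ1.le hy1)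
  have hneg := hG.prod_fiberwise (hasSum_coneTerm_neg hQ hQy hQ1.le)
  rw [sub_eq_add_neg]
  refine .of_nat_of_neg_add_one hpos ?_
  simpa only [neg_neg] using hneg.neg

end ConeTerm

lemma hasSum_ite_nonneg_and_one_le_iff {α : Type*} [AddCommMonoid α] [TopologicalSpace α]
    (f : ℤ × ℤ → α) {a : α} :
    HasSum (fun n : ℤ × ℤ => if 0 ≤ n.1 ∧ 1 ≤ n.2 then f n else 0) a ↔
      HasSum (fun p : ℕ × ℕ => f (p.1, 1 + p.2)) a := by
  refine Injective.hasSum_ite_iff (fun p q h => ?_) (fun n => ⟨fun h => ?_, ?_⟩) f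
  · simp only [Prod.mk.injEq] at h
    ext <;> omega
  · exact ⟨(n.1.toNat, (n.2 - 1).toNat), Prod.ext (by dsimp only; omega) (by dsimp only; omega)⟩
  · rintro ⟨p, rfl⟩
    simp

lemma hasSum_ite_neg_and_nonpos_iff {α : Type*} [AddCommMonoid α] [TopologicalSpace α]
    (f : ℤ × ℤ → α) {a : α} :
    HasSum (fun n : ℤ × ℤ => if n.1 < 0 ∧ n.2 ≤ 0 then f n else 0) a ↔
      HasSum (fun p : ℕ × ℕ => f (-(p.1 + 1), -p.2)) a := by
  refine Injective.hasSum_ite_iff (fun p q h => ?_) (fun n => ⟨fun h => ?_, ?_⟩) f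
  · simp only [Prod.mk.injEq] at h
    ext <;> omega
  · exact ⟨((-n.1 - 1).toNat, (-n.2).toNat), Prod.ext (by dsimp only; omega) (by dsimp only; omega)⟩
  · rintro ⟨p, rfl⟩
    simp only
    omega

lemma qp_intCast (τ : ℂ) (j : ℤ) : qp τ j = qParam 1 τ ^ j := by
  rw [qp, qParam, ofReal_one, div_one, ← Complex.exp_int_mul]
  push_cast
  ring_nf

lemma zpow_mul_qp_eq_coneTerm (y τ : ℂ) (m : ℕ) (k l : ℤ) :
    y ^ (2 * k * (m : ℤ) + l) * qp τ ((m : ℝ) * (k : ℝ) ^ 2 + (k : ℝ) * (l : ℝ)) =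
      coneTerm y (qParam 1 τ) m k l := by
  rw [coneTerm, ← qp_intCast]
  push_cast
  rfl

lemma zpow_mul_qp_eq_coneTerm_one (y τ : ℂ) (m : ℕ) (k : ℤ) :
    y ^ (2 * k * (m : ℤ) + 1) * qp τ ((m : ℝ) * (k : ℝ) ^ 2 + (k : ℝ)) =
      coneTerm y (qParam 1 τ) m k 1 := by
  simpa using zpow_mul_qp_eq_coneTerm y τ m k 1

theorem f2_cone_expansion_general (m : ℕ) (hm : 0 < m) (τ z : ℂ)
    (hz0 : 0 < z.im) (hz1 : z.im < τ.im)
    (y : ℂ) (hy : y = Complex.exp (2 * Real.pi * Complex.I * z)) :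
    Summable (fun k : ℤ =>
      ‖y ^ (2 * k * (m : ℤ) + 1) * qp τ ((m : ℝ) * (k : ℝ) ^ 2 + (k : ℝ)) / (1 - y * qp τ (k : ℝ))‖) ∧
    Summable (fun n : ℤ × ℤ => if 0 ≤ n.1 ∧ 1 ≤ n.2 then
      ‖y ^ (2 * n.1 * (m : ℤ) + n.2) * qp τ ((m : ℝ) * (n.1 : ℝ) ^ 2 + (n.1 : ℝ) * (n.2 : ℝ))‖
      else 0) ∧
    Summable (fun n : ℤ × ℤ => if n.1 < 0 ∧ n.2 ≤ 0 then
      ‖y ^ (2 * n.1 * (m : ℤ) + n.2) * qp τ ((m : ℝ) * (n.1 : ℝ) ^ 2 + (n.1 : ℝ) * (n.2 : ℝ))‖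
      else 0) ∧
    (∑' k : ℤ, y ^ (2 * k * (m : ℤ) + 1) * qp τ ((m : ℝ) * (k : ℝ) ^ 2 + (k : ℝ)) / (1 - y * qp τ (k : ℝ))) =
      (∑' n : ℤ × ℤ, if 0 ≤ n.1 ∧ 1 ≤ n.2 then
        y ^ (2 * n.1 * (m : ℤ) + n.2) * qp τ ((m : ℝ) * (n.1 : ℝ) ^ 2 + (n.1 : ℝ) * (n.2 : ℝ))
        else 0) -
      (∑' n : ℤ × ℤ, if n.1 < 0 ∧ n.2 ≤ 0 then
        y ^ (2 * n.1 * (m : ℤ) + n.2) * qp τ ((m : ℝ) * (n.1 : ℝ) ^ 2 + (n.1 : ℝ) * (n.2 : ℝ))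
        else 0) := by
  have hyz : y = qParam 1 z := by rw [hy, qParam, ofReal_one, div_one]
  simp only [zpow_mul_qp_eq_coneTerm, zpow_mul_qp_eq_coneTerm_one, qp_intCast]
  set Q := qParam 1 τ
  have hQ : Q ≠ 0 := qParam_ne_zero τ
  have hQy : ‖Q‖ < ‖y‖ := by
    rw [hyz, norm_qParam 1 z]
    exact (norm_qParam_lt_iff one_pos _ τ).2 hz1
  have hy1 : ‖y‖ < 1 := hyz ▸ norm_qParam_lt_one one_pos hz0
  have hy0 : y ≠ 0 := norm_pos_iff.1 ((norm_nonneg Q).trans_lt hQy)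
  have hQ1 : ‖Q‖ < 1 := hQy.trans hy1
  have hF := summable_norm_coneTerm_one_add hm hy0 hQ hQ1 hy1
  have hG := summable_norm_coneTerm_neg hm hQ hQy hQ1
  refine ⟨summable_norm_coneTerm_div hm hQ hQy hy1, ?_, ?_, ?_⟩
  · exact ⟨_, (hasSum_ite_nonneg_and_one_le_iff fun n => ‖coneTerm y Q m n.1 n.2‖).2 hF.hasSum⟩
  · exact ⟨_, (hasSum_ite_neg_and_nonpos_iff fun n => ‖coneTerm y Q m n.1 n.2‖).2 hG.hasSum⟩
  rw [((hasSum_ite_nonneg_and_one_le_iff fun n => coneTerm y Q m n.1 n.2).2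
      hF.of_norm.hasSum).tsum_eq,
    ((hasSum_ite_neg_and_nonpos_iff fun n => coneTerm y Q m n.1 n.2).2
      hG.of_norm.hasSum).tsum_eq]
  exact (hasSum_coneTerm_div hm hQ hQy hy1).tsum_eq

/-- Geometric expansion of `f₂`: for `0 < Im z < Im τ`,
`Σ_{k∈ℤ} y^{2km+1} q^{mk²+k}/(1 - y q^k) = Σ_{k≥0,l≥1} y^{2km+l} q^{mk²+kl}
  - Σ_{k<0,l≤0} y^{2km+l} q^{mk²+kl}`. -/
theorem f2_cone_expansion (m : ℕ) (hm : 0 < m) (τ z : ℂ) (hτ : 0 < τ.im)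
    (hz0 : 0 < z.im) (hz1 : z.im < τ.im)
    (y : ℂ) (hy : y = Complex.exp (2 * Real.pi * Complex.I * z)) :
    Summable (fun k : ℤ =>
      ‖y ^ (2 * k * (m : ℤ) + 1) * qp τ ((m : ℝ) * (k : ℝ) ^ 2 + (k : ℝ)) / (1 - y * qp τ (k : ℝ))‖) ∧
    Summable (fun n : ℤ × ℤ => if 0 ≤ n.1 ∧ 1 ≤ n.2 then
      ‖y ^ (2 * n.1 * (m : ℤ) + n.2) * qp τ ((m : ℝ) * (n.1 : ℝ) ^ 2 + (n.1 : ℝ) * (n.2 : ℝ))‖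
      else 0) ∧
    Summable (fun n : ℤ × ℤ => if n.1 < 0 ∧ n.2 ≤ 0 then
      ‖y ^ (2 * n.1 * (m : ℤ) + n.2) * qp τ ((m : ℝ) * (n.1 : ℝ) ^ 2 + (n.1 : ℝ) * (n.2 : ℝ))‖
      else 0) ∧
    (∑' k : ℤ, y ^ (2 * k * (m : ℤ) + 1) * qp τ ((m : ℝ) * (k : ℝ) ^ 2 + (k : ℝ)) / (1 - y * qp τ (k : ℝ))) =
      (∑' n : ℤ × ℤ, if 0 ≤ n.1 ∧ 1 ≤ n.2 then
        y ^ (2 * n.1 * (m : ℤ) + n.2) * qp τ ((m : ℝ) * (n.1 : ℝ) ^ 2 + (n.1 : ℝ) * (n.2 : ℝ))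
        else 0) -
      (∑' n : ℤ × ℤ, if n.1 < 0 ∧ n.2 ≤ 0 then
        y ^ (2 * n.1 * (m : ℤ) + n.2) * qp τ ((m : ℝ) * (n.1 : ℝ) ^ 2 + (n.1 : ℝ) * (n.2 : ℝ))
        else 0) :=
  f2_cone_expansion_general m hm τ z hz0 hz1 y hy
end
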